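/- arXiv:2305.11406 — 9 statements merged into one kernel-verified Lean document; each statement's English description precedes it below -/
import Mathlib

section
/- Consider a course-allocation economy with nonnegative course prices p in which every student's allocated bundle is demand-consistent and the market-clearing error is at most α ≥ 0. Suppose the economy contains four distinct courses c_i, c_j, c_k, c_0 and a natural number n divisible by 3 with n > 3α such that: (1) course c_k has capacity 2n/3; (2) the price of c_0 is 0; (3) every student's budget lies in [1, 1+β], where β ≥ 0; (4) there is a set G of n students each of whose utility of a bundle x is −∞ (invalid) if x contains both c_0 and c_k, and otherwise equals 8·x_i + 4·x_j + 2·x_k + x_0 + 16·𝟙[x_i + x_j + 2x_0 ≥ 2], where x_ℓ ∈ {0,1} indicates whether course c_ℓ belongs to the bundle and the utility does not depend on any other course; (5) at most n/3 students outside G are allocated course c_k. Then p_i + p_j + p_k ≥ 1, and moreover either p_i + p_j + p_k ≤ 1 + β or p_k = 0. Consequently, if in addition p_i + p_j ≤ 1, then p_k ∈ [1 − p_i − p_j, 1 − p_i − p_j + β]. -/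
open Finset

/-- The NOT-SUM gadget of the PPAD-hardness reduction for A-CEEI.

In a course-allocation economy with nonnegative prices `p`, demand-consistent
allocation `a`, and market-clearing error (the ℓ2-norm of the clipped excess
demand) at most `α`, suppose there are four distinct courses `ci, cj, ck, c0`
and `n` students (the set `G`, with `3 ∣ n` and `n > 3α`) whose utility of a
bundle `x` is `⊥` (invalid) if `x` contains both `c0` and `ck`, and otherwise
`8·x_i + 4·x_j + 2·x_k + x_0 + 16·𝟙[x_i + x_j + 2x_0 ≥ 2]`.  If `ck` has
capacity `2n/3`, `p c0 = 0`, all budgets lie in `[1, 1+β]`, and at most `n/3`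
students outside `G` are allocated `ck`, then `p ci + p cj + p ck ≥ 1`, and
either `p ci + p cj + p ck ≤ 1 + β` or `p ck = 0`; consequently, if
`p ci + p cj ≤ 1` then `p ck ∈ [1 - p ci - p cj, 1 - p ci - p cj + β]`. -/
theorem not_sum_gadget
    {C S : Type*} [Fintype C] [DecidableEq C] [Fintype S] [DecidableEq S]
    (p : C → ℝ) (cap : C → ℕ) (b : S → ℝ) (u : S → Finset C → EReal)
    (a : S → Finset C) (α β : ℝ) (hα : 0 ≤ α) (hβ : 0 ≤ β)
    -- nonnegative prices
    (hp : ∀ j, 0 ≤ p j)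
    -- demand consistency: each student's bundle is affordable and utility-maximal
    -- among affordable bundles
    (hdemand : ∀ i : S, (∑ j ∈ a i, p j) ≤ b i ∧
      ∀ T : Finset C, (∑ j ∈ T, p j) ≤ b i → u i T ≤ u i (a i))
    -- the market-clearing error is at most α
    (herr : Real.sqrt (∑ j : C,
        (if 0 < p j then ((univ.filter (fun i : S => j ∈ a i)).card : ℝ) - cap j
         else max (((univ.filter (fun i : S => j ∈ a i)).card : ℝ) - cap j) 0) ^ 2) ≤ α)
    (ci cj ck c0 : C)
    -- the four courses are distinct
    (hij : ci ≠ cj) (hik : ci ≠ ck) (hi0 : ci ≠ c0)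
    (hjk : cj ≠ ck) (hj0 : cj ≠ c0) (hk0 : ck ≠ c0)
    (n : ℕ) (hn3 : 3 ∣ n) (hnα : 3 * α < (n : ℝ))
    -- (1) course ck has capacity 2n/3
    (hcapk : 3 * cap ck = 2 * n)
    -- (2) the price of c0 is zero
    (hp0 : p c0 = 0)
    -- (3) budgets lie in [1, 1+β]
    (hb : ∀ i : S, 1 ≤ b i ∧ b i ≤ 1 + β)
    -- (4) the set G of n gadget students and their utility function
    (G : Finset S) (hG : G.card = n)
    (hu : ∀ i ∈ G, ∀ x : Finset C,
      u i x = if c0 ∈ x ∧ ck ∈ x then (⊥ : EReal) else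
        (((if ci ∈ x then (8 : ℝ) else 0) + (if cj ∈ x then (4 : ℝ) else 0) +
          (if ck ∈ x then (2 : ℝ) else 0) + (if c0 ∈ x then (1 : ℝ) else 0) +
          (if 2 ≤ (if ci ∈ x then (1 : ℕ) else 0) + (if cj ∈ x then (1 : ℕ) else 0) +
              2 * (if c0 ∈ x then (1 : ℕ) else 0) then (16 : ℝ) else 0)) : ℝ))
    -- (5) at most n/3 students outside G are allocated ck
    (hout : 3 * (univ.filter (fun i : S => i ∉ G ∧ ck ∈ a i)).card ≤ n) :
    1 ≤ p ci + p cj + p ck ∧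
    (p ci + p cj + p ck ≤ 1 + β ∨ p ck = 0) ∧
    (p ci + p cj ≤ 1 →
      1 - p ci - p cj ≤ p ck ∧ p ck ≤ 1 - p ci - p cj + β) := by
  classical
  -- abbreviations
  set Dk : ℝ := ((univ.filter (fun i : S => ck ∈ a i)).card : ℝ) with hDkdef
  set t : ℝ := (if 0 < p ck then Dk - cap ck else max (Dk - cap ck) 0) with htdef
  have htα : |t| ≤ α := by
    have h1 : t ^ 2 ≤ ∑ j : C,
        (if 0 < p j then ((univ.filter (fun i : S => j ∈ a i)).card : ℝ) - cap j
         else max (((univ.filter (fun i : S => j ∈ a i)).card : ℝ) - cap j) 0) ^ 2 :=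
      Finset.single_le_sum (f := fun j =>
        (if 0 < p j then ((univ.filter (fun i : S => j ∈ a i)).card : ℝ) - cap j
         else max (((univ.filter (fun i : S => j ∈ a i)).card : ℝ) - cap j) 0) ^ 2)
        (fun j _ => sq_nonneg _) (mem_univ ck)
    calc |t| = Real.sqrt (t ^ 2) := (Real.sqrt_sq_eq_abs t).symm
      _ ≤ _ := Real.sqrt_le_sqrt h1
      _ ≤ α := herr
  have hcap' : (cap ck : ℝ) = 2 * n / 3 := by
    have := congrArg (fun m : ℕ => (m : ℝ)) hcapk
    push_cast at this
    linarith
  -- Claim 1 : lower bound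
  have hlow : 1 ≤ p ci + p cj + p ck := by
    by_contra hlt
    push_neg at hlt
    have hall : ∀ i ∈ G, ck ∈ a i := by
      intro i hi
      have hbud := hb i
      have hsum : ∑ j ∈ ({ci, cj, ck} : Finset C), p j = p ci + p cj + p ck := by
        rw [Finset.sum_insert (by simp [hij, hik]),
            Finset.sum_insert (by simp [hjk]), Finset.sum_singleton]
        ring
      have haff : ∑ j ∈ ({ci, cj, ck} : Finset C), p j ≤ b i := by
        rw [hsum]; linarith [hbud.1]
      have hle := (hdemand i).2 _ haff
      have hval : u i ({ci, cj, ck} : Finset C) = ((30 : ℝ) : EReal) := by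
        rw [hu i hi]
        simp [Ne.symm hi0, Ne.symm hj0, Ne.symm hk0]
        norm_cast
      by_contra hck
      rw [hval, hu i hi (a i), if_neg (fun h => hck h.2)] at hle
      have hle' : (30 : ℝ) ≤ _ := EReal.coe_le_coe_iff.mp hle
      have hA : (if ci ∈ a i then (8 : ℝ) else 0) ≤ 8 := by split <;> norm_num
      have hB : (if cj ∈ a i then (4 : ℝ) else 0) ≤ 4 := by split <;> norm_num
      have hC : (if ck ∈ a i then (2 : ℝ) else 0) = 0 := if_neg hck
      have hD : (if c0 ∈ a i then (1 : ℝ) else 0) ≤ 1 := by split <;> norm_num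
      have hE : (if 2 ≤ (if ci ∈ a i then (1 : ℕ) else 0) + (if cj ∈ a i then (1 : ℕ) else 0) +
          2 * (if c0 ∈ a i then (1 : ℕ) else 0) then (16 : ℝ) else 0) ≤ 16 := by
        split_ifs <;> norm_num
      linarith
    have hsub : G ⊆ univ.filter (fun i : S => ck ∈ a i) := fun i hi =>
      mem_filter.mpr ⟨mem_univ i, hall i hi⟩
    have hDk : (n : ℝ) ≤ Dk := by
      rw [hDkdef]
      exact_mod_cast hG ▸ Finset.card_le_card hsub
    have htge : Dk - cap ck ≤ t := by
      rw [htdef]; split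
      · exact le_rfl
      · exact le_max_left _ _
    have : (n : ℝ) / 3 ≤ t := by rw [hcap'] at htge; linarith
    have := le_abs_self t
    linarith
  -- Claim 2 : upper bound or zero price
  have hupper : p ci + p cj + p ck ≤ 1 + β ∨ p ck = 0 := by
    by_contra hcon
    push_neg at hcon
    obtain ⟨hgt, hpk⟩ := hcon
    have hpk' : 0 < p ck := lt_of_le_of_ne (hp ck) (Ne.symm hpk)
    have hnone : ∀ i ∈ G, ck ∉ a i := by
      intro i hi hck
      have hbud := hb i
      have haff := (hdemand i).1
      -- c0 is not in the bundle
      have h0 : c0 ∉ a i := by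
        intro h0
        have hemp : u i ∅ ≤ u i (a i) := (hdemand i).2 ∅ (by simp; linarith [hbud.1])
        rw [hu i hi (a i), if_pos ⟨h0, hck⟩, hu i hi ∅] at hemp
        simp at hemp
      -- not both ci and cj
      have hnotboth : ¬(ci ∈ a i ∧ cj ∈ a i) := by
        rintro ⟨h1, h2⟩
        have hsub : ({ci, cj, ck} : Finset C) ⊆ a i := by
          intro x hx
          simp only [mem_insert, mem_singleton] at hx
          rcases hx with rfl | rfl | rfl <;> assumption
        have hsum : p ci + p cj + p ck ≤ ∑ j ∈ a i, p j := by
          calc p ci + p cj + p ck = ∑ j ∈ ({ci, cj, ck} : Finset C), p j := by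
                rw [Finset.sum_insert (by simp [hij, hik]),
                    Finset.sum_insert (by simp [hjk]), Finset.sum_singleton]
                ring
            _ ≤ ∑ j ∈ a i, p j :=
                Finset.sum_le_sum_of_subset_of_nonneg hsub (fun j _ _ => hp j)
        linarith [hbud.2]
      -- the alternative bundle : swap ck for the free course c0
      set T : Finset C := insert c0 ((a i).erase ck) with hTdef
      have hc0e : c0 ∉ (a i).erase ck := fun h => h0 (Finset.mem_of_mem_erase h)
      have hTsum : ∑ j ∈ T, p j = (∑ j ∈ a i, p j) - p ck := by
        rw [hTdef, Finset.sum_insert hc0e, hp0, Finset.sum_erase_eq_sub hck]; ring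
      have hTaff : ∑ j ∈ T, p j ≤ b i := by rw [hTsum]; linarith [hp ck]
      have hle := (hdemand i).2 T hTaff
      have hciT : ci ∈ T ↔ ci ∈ a i := by simp [hTdef, hi0, hik]
      have hcjT : cj ∈ T ↔ cj ∈ a i := by simp [hTdef, hj0, hjk]
      have hckT : ck ∉ T := by simp [hTdef, hk0]
      have hc0T : c0 ∈ T := mem_insert_self _ _
      have hne1 : ¬(c0 ∈ T ∧ ck ∈ T) := fun h => hckT h.2
      have hne2 : ¬(c0 ∈ a i ∧ ck ∈ a i) := fun h => h0 h.1
      rw [hu i hi T, hu i hi (a i), if_neg hne1, if_neg hne2] at hle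
      have hle' := EReal.coe_le_coe_iff.mp hle
      simp only [hciT, hcjT] at hle'
      by_cases h1 : ci ∈ a i <;> by_cases h2 : cj ∈ a i
      · exact hnotboth ⟨h1, h2⟩
      · simp [h1, h2, h0, hck, hckT, hc0T] at hle'; linarith
      · simp [h1, h2, h0, hck, hckT, hc0T] at hle'; linarith
      · simp [h1, h2, h0, hck, hckT, hc0T] at hle'; linarith
    have hsub : univ.filter (fun i : S => ck ∈ a i) ⊆
        univ.filter (fun i : S => i ∉ G ∧ ck ∈ a i) := by
      intro i hi
      rw [mem_filter] at hi ⊢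
      exact ⟨hi.1, fun hG' => hnone i hG' hi.2, hi.2⟩
    have hDk : 3 * Dk ≤ (n : ℝ) := by
      have h1 : (univ.filter (fun i : S => ck ∈ a i)).card ≤
          (univ.filter (fun i : S => i ∉ G ∧ ck ∈ a i)).card := Finset.card_le_card hsub
      rw [hDkdef]
      have : 3 * (univ.filter (fun i : S => ck ∈ a i)).card ≤ n := le_trans (by omega) hout
      exact_mod_cast this
    have hteq : t = Dk - cap ck := if_pos hpk'
    have : t ≤ -((n : ℝ) / 3) := by rw [hteq, hcap']; linarith
    have := neg_le_abs t
    linarith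
  refine ⟨hlow, hupper, fun hsum => ⟨by linarith, ?_⟩⟩
  rcases hupper with h | h
  · linarith
  · linarith
end

section
/- Consider a course-allocation economy with nonnegative course prices p in which every student's allocated bundle is demand-consistent and the market-clearing error is at most α ≥ 0. Suppose the economy contains four distinct courses c_i, c_1, c_j, c_0 and an even natural number n with n > 2α such that: (1) course c_1 has capacity 7n/2; (2) the price of c_0 is 0; (3) every student's budget lies in [1, 1+β], where β ≥ 0; (4) the price of the input course satisfies 0 ≤ p_i ≤ 1; (5) there is a set G_1 of n students each of whose utility of a bundle x is −∞ (invalid) if x contains both c_0 and c_1, and otherwise equals 4·x_i + 2·x_1 + x_0 + 8·𝟙[x_i + x_0 ≥ 1]; (6) there is a disjoint set G_2 of 3n students each of whose utility of a bundle x is −∞ (invalid) if x contains both c_0 and c_j, and otherwise equals 4·x_1 + 2·x_j + x_0 + 8·𝟙[x_0 + x_1 ≥ 1]; (7) no student outside G_1 ∪ G_2 is allocated course c_1. Then the price of course c_1 satisfies p_1 ∈ [1 − p_i, 1 − p_i + β]. -/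
open Finset

/-- First half of the course-size amplification gadget of the PPAD-hardness
reduction for A-CEEI.

In a course-allocation economy with nonnegative prices `p`, demand-consistent
allocation `a`, and market-clearing error (the ℓ2-norm of the clipped excess
demand) at most `α`, suppose there are four distinct courses `ci, c1, cj, c0`,
an even `n > 2α`, a set `G₁` of `n` students whose utility of a bundle `x` is
`⊥` (invalid) if `x` contains both `c0` and `c1` and otherwise
`4·x_i + 2·x_1 + x_0 + 8·𝟙[x_i + x_0 ≥ 1]`, and a disjoint set `G₂` of `3n`
students whose utility of `x` is `⊥` if `x` contains both `c0` and `cj` and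
otherwise `4·x_1 + 2·x_j + x_0 + 8·𝟙[x_0 + x_1 ≥ 1]`.  If `c1` has capacity
`7n/2`, `p c0 = 0`, `0 ≤ p ci ≤ 1`, budgets lie in `[1, 1+β]`, and no student
outside `G₁ ∪ G₂` is allocated `c1`, then `p c1 ∈ [1 - p ci, 1 - p ci + β]`. -/
theorem course_size_amplification_first_half
    {C S : Type*} [Fintype C] [DecidableEq C] [Fintype S] [DecidableEq S]
    (p : C → ℝ) (cap : C → ℕ) (b : S → ℝ) (u : S → Finset C → EReal)
    (a : S → Finset C) (α β : ℝ) (hα : 0 ≤ α) (hβ : 0 ≤ β)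
    -- nonnegative prices
    (hp : ∀ j, 0 ≤ p j)
    -- demand consistency: each student's bundle is affordable and utility-maximal
    -- among affordable bundles
    (hdemand : ∀ i : S, (∑ j ∈ a i, p j) ≤ b i ∧
      ∀ T : Finset C, (∑ j ∈ T, p j) ≤ b i → u i T ≤ u i (a i))
    -- the market-clearing error is at most α
    (herr : Real.sqrt (∑ j : C,
        (if 0 < p j then ((univ.filter (fun i : S => j ∈ a i)).card : ℝ) - cap j
         else max (((univ.filter (fun i : S => j ∈ a i)).card : ℝ) - cap j) 0) ^ 2) ≤ α)
    (ci c1 cj c0 : C)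
    -- the four courses are distinct
    (hi1 : ci ≠ c1) (hij : ci ≠ cj) (hi0 : ci ≠ c0)
    (h1j : c1 ≠ cj) (h10 : c1 ≠ c0) (hj0 : cj ≠ c0)
    (n : ℕ) (hn2 : 2 ∣ n) (hnα : 2 * α < (n : ℝ))
    -- (1) course c1 has capacity 7n/2
    (hcap1 : 2 * cap c1 = 7 * n)
    -- (2) the price of c0 is zero
    (hp0 : p c0 = 0)
    -- (3) budgets lie in [1, 1+β]
    (hb : ∀ i : S, 1 ≤ b i ∧ b i ≤ 1 + β)
    -- (4) the price of the input course lies in [0, 1]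
    (hpi : 0 ≤ p ci ∧ p ci ≤ 1)
    -- (5) the set G₁ of n gadget students and their utility function
    (G₁ : Finset S) (hG₁ : G₁.card = n)
    (hu₁ : ∀ i ∈ G₁, ∀ x : Finset C,
      u i x = if c0 ∈ x ∧ c1 ∈ x then (⊥ : EReal) else
        (((if ci ∈ x then (4 : ℝ) else 0) + (if c1 ∈ x then (2 : ℝ) else 0) +
          (if c0 ∈ x then (1 : ℝ) else 0) +
          (if 1 ≤ (if ci ∈ x then (1 : ℕ) else 0) + (if c0 ∈ x then (1 : ℕ) else 0)
           then (8 : ℝ) else 0)) : ℝ))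
    -- (6) the disjoint set G₂ of 3n gadget students and their utility function
    (G₂ : Finset S) (hG₂ : G₂.card = 3 * n) (hdisj : Disjoint G₁ G₂)
    (hu₂ : ∀ i ∈ G₂, ∀ x : Finset C,
      u i x = if c0 ∈ x ∧ cj ∈ x then (⊥ : EReal) else
        (((if c1 ∈ x then (4 : ℝ) else 0) + (if cj ∈ x then (2 : ℝ) else 0) +
          (if c0 ∈ x then (1 : ℝ) else 0) +
          (if 1 ≤ (if c0 ∈ x then (1 : ℕ) else 0) + (if c1 ∈ x then (1 : ℕ) else 0)
           then (8 : ℝ) else 0)) : ℝ))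
    -- (7) no student outside G₁ ∪ G₂ is allocated c1
    (hout : ∀ i : S, i ∉ G₁ → i ∉ G₂ → c1 ∉ a i) :
    1 - p ci ≤ p c1 ∧ p c1 ≤ 1 - p ci + β := by

  -- abbreviation for demand of a course
  set d : C → ℝ := fun j => ((univ.filter (fun i : S => j ∈ a i)).card : ℝ) with hd_def
  -- clipped excess demand
  set f : C → ℝ := fun j => if 0 < p j then d j - cap j else max (d j - cap j) 0 with hf_def
  have habs : ∀ j : C, |f j| ≤ α := by
    intro j
    have h1 : (f j) ^ 2 ≤ ∑ k : C, (f k) ^ 2 :=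
      Finset.single_le_sum (fun k _ => sq_nonneg (f k)) (mem_univ j)
    have h2 : Real.sqrt ((f j) ^ 2) ≤ Real.sqrt (∑ k : C, (f k) ^ 2) :=
      Real.sqrt_le_sqrt h1
    rw [Real.sqrt_sq_eq_abs] at h2
    exact h2.trans herr
  have hcapR : 2 * (cap c1 : ℝ) = 7 * (n : ℝ) := by exact_mod_cast hcap1
  constructor
  · -- lower bound
    by_contra hlt
    push_neg at hlt
    -- every gadget student gets c1
    have key : ∀ i ∈ G₁ ∪ G₂, c1 ∈ a i := by
      intro i hi
      obtain ⟨haff, hmax⟩ := hdemand i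
      rcases Finset.mem_union.mp hi with hiG | hiG
      · -- G₁ student: {ci, c1} is affordable with utility 14
        have hT : (∑ j ∈ ({ci, c1} : Finset C), p j) ≤ b i := by
          rw [Finset.sum_pair hi1]
          have := (hb i).1
          linarith [hpi.2]
        have hval : u i ({ci, c1} : Finset C) = ((14 : ℝ) : EReal) := by
          rw [hu₁ i hiG]
          have h0 : c0 ∉ ({ci, c1} : Finset C) := by
            simp [Ne.symm hi0, Ne.symm h10]
          have hci : ci ∈ ({ci, c1} : Finset C) := by simp
          have hc1 : c1 ∈ ({ci, c1} : Finset C) := by simp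
          rw [if_neg (by tauto)]
          norm_num [hci, hc1, h0]
        have h14 : ((14 : ℝ) : EReal) ≤ u i (a i) := hval ▸ hmax _ hT
        rw [hu₁ i hiG (a i)] at h14
        by_cases hinv : c0 ∈ a i ∧ c1 ∈ a i
        · exact hinv.2
        · rw [if_neg hinv] at h14
          rw [EReal.coe_le_coe_iff] at h14
          by_contra hc1
          simp only [hc1, if_false] at h14
          split_ifs at h14 <;> linarith
      · -- G₂ student: {c0, c1} is affordable with utility 13
        have hT : (∑ j ∈ ({c0, c1} : Finset C), p j) ≤ b i := by
          rw [Finset.sum_pair (Ne.symm h10), hp0]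
          have := (hb i).1
          linarith [hpi.1]
        have hval : u i ({c0, c1} : Finset C) = ((13 : ℝ) : EReal) := by
          rw [hu₂ i hiG]
          have hj : cj ∉ ({c0, c1} : Finset C) := by
            simp [hj0, Ne.symm h1j]
          have hc0 : c0 ∈ ({c0, c1} : Finset C) := by simp
          have hc1 : c1 ∈ ({c0, c1} : Finset C) := by simp
          rw [if_neg (by tauto)]
          norm_num [hc0, hc1, hj]
        have h13 : ((13 : ℝ) : EReal) ≤ u i (a i) := hval ▸ hmax _ hT
        rw [hu₂ i hiG (a i)] at h13
        by_cases hinv : c0 ∈ a i ∧ cj ∈ a i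
        · rw [if_pos hinv] at h13
          exact absurd (le_bot_iff.mp h13) (EReal.coe_ne_bot _)
        · rw [if_neg hinv] at h13
          rw [EReal.coe_le_coe_iff] at h13
          by_contra hc1
          simp only [hc1, if_false] at h13
          split_ifs at h13 <;> linarith
    -- so demand of c1 is at least 4n
    have hsub : G₁ ∪ G₂ ⊆ univ.filter (fun i : S => c1 ∈ a i) := by
      intro i hi
      exact Finset.mem_filter.mpr ⟨mem_univ i, key i hi⟩
    have hcard : ((G₁ ∪ G₂).card : ℝ) ≤ d c1 := by
      simp only [hd_def]
      exact_mod_cast Finset.card_le_card hsub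
    have hcard4 : ((G₁ ∪ G₂).card : ℝ) = 4 * (n : ℝ) := by
      rw [Finset.card_union_of_disjoint hdisj, hG₁, hG₂]
      push_cast; ring
    have hfge : (n : ℝ) / 2 ≤ f c1 := by
      have hdc : (n : ℝ) / 2 ≤ d c1 - (cap c1 : ℝ) := by linarith
      simp only [hf_def]
      split_ifs
      · exact hdc
      · exact hdc.trans (le_max_left _ _)
    have := habs c1
    have := le_abs_self (f c1)
    linarith
  · -- upper bound
    by_contra hgt
    push_neg at hgt
    have hppos : 0 < p c1 := lt_of_le_of_lt (by linarith [hpi.2]) hgt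
    -- no G₁ student gets c1
    have key : ∀ i ∈ G₁, c1 ∉ a i := by
      intro i hiG
      obtain ⟨haff, hmax⟩ := hdemand i
      have hT : (∑ j ∈ ({ci, c0} : Finset C), p j) ≤ b i := by
        rw [Finset.sum_pair hi0, hp0]
        have := (hb i).1
        linarith [hpi.2]
      have hval : u i ({ci, c0} : Finset C) = ((13 : ℝ) : EReal) := by
        rw [hu₁ i hiG]
        have h1 : c1 ∉ ({ci, c0} : Finset C) := by
          simp [Ne.symm hi1, h10]
        have hci : ci ∈ ({ci, c0} : Finset C) := by simp
        have hc0 : c0 ∈ ({ci, c0} : Finset C) := by simp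
        rw [if_neg (by tauto)]
        norm_num [hci, hc0, h1]
      have h13 : ((13 : ℝ) : EReal) ≤ u i (a i) := hval ▸ hmax _ hT
      intro hc1
      rw [hu₁ i hiG (a i)] at h13
      by_cases hc0 : c0 ∈ a i
      · rw [if_pos ⟨hc0, hc1⟩] at h13
        exact absurd (le_bot_iff.mp h13) (EReal.coe_ne_bot _)
      · rw [if_neg (by tauto)] at h13
        rw [EReal.coe_le_coe_iff] at h13
        by_cases hci : ci ∈ a i
        · -- the bundle costs more than the budget
          have hsubp : ({ci, c1} : Finset C) ⊆ a i := by
            intro x hx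
            rcases Finset.mem_insert.mp hx with rfl | hx
            · exact hci
            · rw [Finset.mem_singleton.mp hx]; exact hc1
          have hsum : p ci + p c1 ≤ ∑ j ∈ a i, p j := by
            rw [← Finset.sum_pair hi1]
            exact Finset.sum_le_sum_of_subset_of_nonneg hsubp (fun j _ _ => hp j)
          have := (hb i).2
          linarith
        · simp only [hci, hc0, if_false, hc1, if_true] at h13
          norm_num at h13
    -- so demand of c1 is at most 3n
    have hsub : univ.filter (fun i : S => c1 ∈ a i) ⊆ G₂ := by
      intro i hi
      have hc1 : c1 ∈ a i := (Finset.mem_filter.mp hi).2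
      by_contra hG2
      by_cases hG1 : i ∈ G₁
      · exact key i hG1 hc1
      · exact hout i hG1 hG2 hc1
    have hcard : d c1 ≤ 3 * (n : ℝ) := by
      have := Finset.card_le_card hsub
      rw [hG₂] at this
      have : ((univ.filter (fun i : S => c1 ∈ a i)).card : ℝ) ≤ ((3 * n : ℕ) : ℝ) := by
        exact_mod_cast this
      simpa using this
    have hfle : f c1 ≤ -((n : ℝ) / 2) := by
      simp only [hf_def, if_pos hppos]
      linarith
    have := habs c1
    have := neg_abs_le (f c1)
    linarith
end

section
/- Consider a course-allocation economy with nonnegative course prices p in whichic every student's allocated bundle is demand-consistent and the market-clearing error is at most α ≥ 0. Suppose the economy contains four distinct courses c_i, c_1, c_j, c_0 and an even natural number n with n > 2α such that: (1) course c_1 has capacity 7n/2 and course c_j has capacity 5n/2; (2) the price of c_0 is 0; (3) every student's budget lies in [1, 1+β], where β ≥ 0; (4) the price of the input course satisfies 0 ≤ p_i ≤ 1; (5) there is a set G_1 of n students each of whose utility of a bundle x is −∞ (invalid) if x contains both c_0 and c_1, and otherwise equals 4·x_i + 2·x_1 + x_0 + 8·𝟙[x_i + x_0 ≥ 1]; (6)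 there is a disjoint set G_2 of 3n students each of whose utility of a bundle x is −∞ (invalid) if x contains both c_0 and c_j, and otherwise equals 4·x_1 + 2·x_j + x_0 + 8·𝟙[x_0 + x_1 ≥ 1]; (7) no student outside G_1 ∪ G_2 is allocated course c_1, and at most 2n students outside G_2 are allocated course c_j. Then p_1 ∈ [1 − p_i, 1 − p_i + β], p_j ∈ [1 − p_1, 1 − p_1 + β], and hence the price of the output course satisfies p_j ∈ [p_i − β, p_i + β]. -/
open Finset

set_option maxHeartbeats 1200000

/-- The course-size amplification gadget of the PPAD-hardness reduction for A-CEEI.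

In a course-allocation economy with nonnegative prices `p`, demand-consistent
allocation `a`, and market-clearing error (the ℓ2-norm of the clipped excess
demand) at most `α`, suppose there are four distinct courses `ci, c1, cj, c0`,
an even `n > 2α`, a set `G₁` of `n` students whose utility of a bundle `x` is
`⊥` (invalid) if `x` contains both `c0` and `c1` and otherwise
`4·x_i + 2·x_1 + x_0 + 8·𝟙[x_i + x_0 ≥ 1]`, and a disjoint set `G₂` of `3n`
students whose utility of `x` is `⊥` if `x` contains both `c0` and `cj` and
otherwise `4·x_1 + 2·x_j + x_0 + 8·𝟙[x_0 + x_1 ≥ 1]`.  If `c1` has capacity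
`7n/2`, `cj` has capacity `5n/2`, `p c0 = 0`, `0 ≤ p ci ≤ 1`, budgets lie in
`[1, 1+β]`, no student outside `G₁ ∪ G₂` is allocated `c1`, and at most `2n`
students outside `G₂` are allocated `cj`, then `p c1 ∈ [1 - p ci, 1 - p ci + β]`,
`p cj ∈ [1 - p c1, 1 - p c1 + β]`, and hence `p cj ∈ [p ci - β, p ci + β]`. -/
theorem course_size_amplification_gadget
    {C S : Type*} [Fintype C] [DecidableEq C] [Fintype S] [DecidableEq S]
    (p : C → ℝ) (cap : C → ℕ) (b : S → ℝ) (u : S → Finset C → EReal)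
    (a : S → Finset C) (α β : ℝ) (hα : 0 ≤ α) (hβ : 0 ≤ β)
    -- nonnegative prices
    (hp : ∀ j, 0 ≤ p j)
    -- demand consistency: each student's bundle is affordable and utility-maximal
    -- among affordable bundles
    (hdemand : ∀ i : S, (∑ j ∈ a i, p j) ≤ b i ∧
      ∀ T : Finset C, (∑ j ∈ T, p j) ≤ b i → u i T ≤ u i (a i))
    -- the market-clearing error is at most α
    (herr : Real.sqrt (∑ j : C,
        (if 0 < p j then ((univ.filter (fun i : S => j ∈ a i)).card : ℝ) - cap j
         else max (((univ.filter (fun i : S => j ∈ a i)).card : ℝ) - cap j) 0) ^ 2) ≤ α)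
    (ci c1 cj c0 : C)
    -- the four courses are distinct
    (hi1 : ci ≠ c1) (hij : ci ≠ cj) (hi0 : ci ≠ c0)
    (h1j : c1 ≠ cj) (h10 : c1 ≠ c0) (hj0 : cj ≠ c0)
    (n : ℕ) (hn2 : 2 ∣ n) (hnα : 2 * α < (n : ℝ))
    -- (1) course c1 has capacity 7n/2 and course cj has capacity 5n/2
    (hcap1 : 2 * cap c1 = 7 * n) (hcapj : 2 * cap cj = 5 * n)
    -- (2) the price of c0 is zero
    (hp0 : p c0 = 0)
    -- (3) budgets lie in [1, 1+β]
    (hb : ∀ i : S, 1 ≤ b i ∧ b i ≤ 1 + β)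
    -- (4) the price of the input course lies in [0, 1]
    (hpi : 0 ≤ p ci ∧ p ci ≤ 1)
    -- (5) the set G₁ of n gadget students and their utility function
    (G₁ : Finset S) (hG₁ : G₁.card = n)
    (hu₁ : ∀ i ∈ G₁, ∀ x : Finset C,
      u i x = if c0 ∈ x ∧ c1 ∈ x then (⊥ : EReal) else
        (((if ci ∈ x then (4 : ℝ) else 0) + (if c1 ∈ x then (2 : ℝ) else 0) +
          (if c0 ∈ x then (1 : ℝ) else 0) +
          (if 1 ≤ (if ci ∈ x then (1 : ℕ) else 0) + (if c0 ∈ x then (1 : ℕ) else 0)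
           then (8 : ℝ) else 0)) : ℝ))
    -- (6) the disjoint set G₂ of 3n gadget students and their utility function
    (G₂ : Finset S) (hG₂ : G₂.card = 3 * n) (hdisj : Disjoint G₁ G₂)
    (hu₂ : ∀ i ∈ G₂, ∀ x : Finset C,
      u i x = if c0 ∈ x ∧ cj ∈ x then (⊥ : EReal) else
        (((if c1 ∈ x then (4 : ℝ) else 0) + (if cj ∈ x then (2 : ℝ) else 0) +
          (if c0 ∈ x then (1 : ℝ) else 0) +
          (if 1 ≤ (if c0 ∈ x then (1 : ℕ) else 0) + (if c1 ∈ x then (1 : ℕ) else 0)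
           then (8 : ℝ) else 0)) : ℝ))
    -- (7) no student outside G₁ ∪ G₂ is allocated c1, and at most 2n students
    -- outside G₂ are allocated cj
    (hout1 : ∀ i : S, i ∉ G₁ → i ∉ G₂ → c1 ∉ a i)
    (houtj : (univ.filter (fun i : S => i ∉ G₂ ∧ cj ∈ a i)).card ≤ 2 * n) :
    (1 - p ci ≤ p c1 ∧ p c1 ≤ 1 - p ci + β) ∧
    (1 - p c1 ≤ p cj ∧ p cj ≤ 1 - p c1 + β) ∧
    (p ci - β ≤ p cj ∧ p cj ≤ p ci + β) := by

  classical
  -- notation for demand counts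
  set D : C → ℕ := fun j => (univ.filter (fun i : S => j ∈ a i)).card with hD
  -- per-course market clearing bounds
  have hsum : (∑ j : C,
      (if 0 < p j then ((univ.filter (fun i : S => j ∈ a i)).card : ℝ) - cap j
       else max (((univ.filter (fun i : S => j ∈ a i)).card : ℝ) - cap j) 0) ^ 2) ≤ α ^ 2 := by
    have h0 : (0:ℝ) ≤ ∑ j : C,
      (if 0 < p j then ((univ.filter (fun i : S => j ∈ a i)).card : ℝ) - cap j
       else max (((univ.filter (fun i : S => j ∈ a i)).card : ℝ) - cap j) 0) ^ 2 :=
      Finset.sum_nonneg fun j _ => sq_nonneg _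
    nlinarith [Real.sq_sqrt h0, Real.sqrt_nonneg (∑ j : C,
      (if 0 < p j then ((univ.filter (fun i : S => j ∈ a i)).card : ℝ) - cap j
       else max (((univ.filter (fun i : S => j ∈ a i)).card : ℝ) - cap j) 0) ^ 2)]
  have hterm : ∀ j0 : C,
      (if 0 < p j0 then ((D j0 : ℝ)) - cap j0
       else max (((D j0 : ℝ)) - cap j0) 0) ^ 2 ≤ α ^ 2 := by
    intro j0
    refine le_trans (Finset.single_le_sum (f := fun j =>
      (if 0 < p j then ((univ.filter (fun i : S => j ∈ a i)).card : ℝ) - cap j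
       else max (((univ.filter (fun i : S => j ∈ a i)).card : ℝ) - cap j) 0) ^ 2)
      (fun j _ => sq_nonneg _) (Finset.mem_univ j0)) hsum
  have habs : ∀ t : ℝ, t ^ 2 ≤ α ^ 2 → -α ≤ t ∧ t ≤ α := by
    intro t ht
    constructor <;> nlinarith
  have hup : ∀ j0 : C, (D j0 : ℝ) - cap j0 ≤ α := by
    intro j0
    have := hterm j0
    by_cases h : 0 < p j0
    · rw [if_pos h] at this; exact (habs _ this).2
    · rw [if_neg h] at this
      have := (habs _ this).2
      exact le_trans (le_max_left _ _) this
  have hdown : ∀ j0 : C, 0 < p j0 → (cap j0 : ℝ) - D j0 ≤ α := by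
    intro j0 h
    have := hterm j0
    rw [if_pos h] at this
    have := (habs _ this).1
    linarith
  -- real-valued capacities
  have hcap1R : (cap c1 : ℝ) = 7 * n / 2 := by
    have : ((2 * cap c1 : ℕ) : ℝ) = ((7 * n : ℕ) : ℝ) := by rw [hcap1]
    push_cast at this; linarith
  have hcapjR : (cap cj : ℝ) = 5 * n / 2 := by
    have : ((2 * cap cj : ℕ) : ℝ) = ((5 * n : ℕ) : ℝ) := by rw [hcapj]
    push_cast at this; linarith
  -- basic utility values of specific bundles for G₁ students
  have hval1_ci_c1 : ∀ i ∈ G₁, u i {ci, c1} = ((14 : ℝ) : EReal) := by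
    intro i hi
    rw [hu₁ i hi]
    norm_num [Finset.mem_insert, Finset.mem_singleton, hi1, hij, hi0, h1j, h10, hj0, hi1.symm, hij.symm, hi0.symm, h1j.symm, h10.symm, hj0.symm]
  have hval1_ci_c0 : ∀ i ∈ G₁, u i {ci, c0} = ((13 : ℝ) : EReal) := by
    intro i hi
    rw [hu₁ i hi]
    norm_num [Finset.mem_insert, Finset.mem_singleton, hi1, hij, hi0, h1j, h10, hj0, hi1.symm, hij.symm, hi0.symm, h1j.symm, h10.symm, hj0.symm]
  have hval1_c0 : ∀ i ∈ G₁, u i {c0} = ((9 : ℝ) : EReal) := by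
    intro i hi
    rw [hu₁ i hi]
    norm_num [Finset.mem_insert, Finset.mem_singleton, hi1, hij, hi0, h1j, h10, hj0, hi1.symm, hij.symm, hi0.symm, h1j.symm, h10.symm, hj0.symm]
  -- utility values for G₂ students
  have hval2_c1_cj : ∀ i ∈ G₂, u i {c1, cj} = ((14 : ℝ) : EReal) := by
    intro i hi
    rw [hu₂ i hi]
    norm_num [Finset.mem_insert, Finset.mem_singleton, hi1, hij, hi0, h1j, h10, hj0, hi1.symm, hij.symm, hi0.symm, h1j.symm, h10.symm, hj0.symm]
  have hval2_c1_c0 : ∀ i ∈ G₂, u i {c1, c0} = ((13 : ℝ) : EReal) := by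
    intro i hi
    rw [hu₂ i hi]
    norm_num [Finset.mem_insert, Finset.mem_singleton, hi1, hij, hi0, h1j, h10, hj0, hi1.symm, hij.symm, hi0.symm, h1j.symm, h10.symm, hj0.symm]
  have hval2_c0 : ∀ i ∈ G₂, u i {c0} = ((9 : ℝ) : EReal) := by
    intro i hi
    rw [hu₂ i hi]
    norm_num [Finset.mem_insert, Finset.mem_singleton, hi1, hij, hi0, h1j, h10, hj0, hi1.symm, hij.symm, hi0.symm, h1j.symm, h10.symm, hj0.symm]
  -- budgets
  have hb1 : ∀ i : S, 1 ≤ b i := fun i => (hb i).1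
  have hb2 : ∀ i : S, b i ≤ 1 + β := fun i => (hb i).2
  -- G₁ demand characterization
  have L2 : ∀ i ∈ G₁, p ci + p c1 ≤ b i → c1 ∈ a i := by
    intro i hi haff
    have hcost : (∑ j ∈ ({ci, c1} : Finset C), p j) ≤ b i := by
      rw [Finset.sum_pair hi1]; exact haff
    have hge := (hdemand i).2 _ hcost
    rw [hval1_ci_c1 i hi] at hge
    by_contra hc1
    rw [hu₁ i hi] at hge
    rw [if_neg (by tauto)] at hge
    rw [EReal.coe_le_coe_iff] at hge
    simp only [hc1, if_false] at hge
    split_ifs at hge <;> linarith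
  have L1 : ∀ i ∈ G₁, c1 ∈ a i → p ci + p c1 ≤ b i := by
    intro i hi hc1
    have hcost0 : (∑ j ∈ ({c0} : Finset C), p j) ≤ b i := by
      rw [Finset.sum_singleton, hp0]; linarith [hb1 i]
    have hge9 := (hdemand i).2 _ hcost0
    rw [hval1_c0 i hi] at hge9
    have hc0 : c0 ∉ a i := by
      intro hc0
      rw [hu₁ i hi, if_pos ⟨hc0, hc1⟩] at hge9
      exact absurd hge9 (by simp)
    have hcost13 : (∑ j ∈ ({ci, c0} : Finset C), p j) ≤ b i := by
      rw [Finset.sum_pair hi0, hp0]; linarith [hb1 i, hpi.2]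
    have hge13 := (hdemand i).2 _ hcost13
    rw [hval1_ci_c0 i hi] at hge13
    have hci : ci ∈ a i := by
      by_contra hci
      rw [hu₁ i hi, if_neg (by tauto)] at hge13
      rw [EReal.coe_le_coe_iff] at hge13
      simp only [hci, hc0, hc1, if_false, if_true] at hge13
      split_ifs at hge13 <;> linarith
    have hsubset : ({ci, c1} : Finset C) ⊆ a i := by
      intro x hx
      simp only [Finset.mem_insert, Finset.mem_singleton] at hx
      rcases hx with rfl | rfl
      · exact hci
      · exact hc1
    calc p ci + p c1 = ∑ j ∈ ({ci, c1} : Finset C), p j := (Finset.sum_pair hi1).symm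
      _ ≤ ∑ j ∈ a i, p j := Finset.sum_le_sum_of_subset_of_nonneg hsubset (fun j _ _ => hp j)
      _ ≤ b i := (hdemand i).1
  -- G₂ demand characterization
  have L4 : ∀ i ∈ G₂, p c1 + p cj ≤ b i → cj ∈ a i := by
    intro i hi haff
    have hcost : (∑ j ∈ ({c1, cj} : Finset C), p j) ≤ b i := by
      rw [Finset.sum_pair h1j]; exact haff
    have hge := (hdemand i).2 _ hcost
    rw [hval2_c1_cj i hi] at hge
    by_contra hcj
    rw [hu₂ i hi] at hge
    rw [if_neg (by tauto)] at hge
    rw [EReal.coe_le_coe_iff] at hge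
    simp only [hcj, if_false] at hge
    split_ifs at hge <;> linarith
  have L3 : ∀ i ∈ G₂, cj ∈ a i → p c1 + p cj ≤ b i := by
    intro i hi hcj
    have hcost0 : (∑ j ∈ ({c0} : Finset C), p j) ≤ b i := by
      rw [Finset.sum_singleton, hp0]; linarith [hb1 i]
    have hge9 := (hdemand i).2 _ hcost0
    rw [hval2_c0 i hi] at hge9
    have hc0 : c0 ∉ a i := by
      intro hc0
      rw [hu₂ i hi, if_pos ⟨hc0, hcj⟩] at hge9
      exact absurd hge9 (by simp)
    have hc1 : c1 ∈ a i := by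
      by_contra hc1
      rw [hu₂ i hi, if_neg (by tauto)] at hge9
      rw [EReal.coe_le_coe_iff] at hge9
      simp only [hc1, hc0, hcj, if_false, if_true] at hge9
      split_ifs at hge9 <;> linarith
    have hsubset : ({c1, cj} : Finset C) ⊆ a i := by
      intro x hx
      simp only [Finset.mem_insert, Finset.mem_singleton] at hx
      rcases hx with rfl | rfl
      · exact hc1
      · exact hcj
    calc p c1 + p cj = ∑ j ∈ ({c1, cj} : Finset C), p j := (Finset.sum_pair h1j).symm
      _ ≤ ∑ j ∈ a i, p j := Finset.sum_le_sum_of_subset_of_nonneg hsubset (fun j _ _ => hp j)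
      _ ≤ b i := (hdemand i).1
  have L5 : ∀ i ∈ G₂, p c1 ≤ b i → c1 ∈ a i := by
    intro i hi haff
    have hcost : (∑ j ∈ ({c1, c0} : Finset C), p j) ≤ b i := by
      rw [Finset.sum_pair h10, hp0]; linarith
    have hge := (hdemand i).2 _ hcost
    rw [hval2_c1_c0 i hi] at hge
    by_contra hc1
    rw [hu₂ i hi] at hge
    by_cases hinv : c0 ∈ a i ∧ cj ∈ a i
    · rw [if_pos hinv] at hge
      exact absurd hge (by simp)
    · rw [if_neg hinv] at hge
      rw [EReal.coe_le_coe_iff] at hge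
      simp only [hc1, if_false] at hge
      split_ifs at hge <;> linarith
  -- four-distinct-count basic facts
  have hnR : (0:ℝ) < n := by linarith
  -- Claim A : 1 - p ci ≤ p c1
  have hA : 1 - p ci ≤ p c1 := by
    by_contra h
    push_neg at h
    have hlt : p ci + p c1 < 1 := by linarith
    have hsub : G₁ ∪ G₂ ⊆ univ.filter (fun i : S => c1 ∈ a i) := by
      intro i hi
      simp only [Finset.mem_filter, Finset.mem_univ, true_and]
      rcases Finset.mem_union.mp hi with hi1' | hi2'
      · exact L2 i hi1' (by linarith [hb1 i])
      · exact L5 i hi2' (by linarith [hb1 i, hpi.1])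
    have hcard := Finset.card_le_card hsub
    rw [Finset.card_union_of_disjoint hdisj, hG₁, hG₂] at hcard
    have hcardR : (n + 3 * n : ℝ) ≤ (D c1 : ℝ) := by exact_mod_cast hcard
    have := hup c1
    rw [hcap1R] at this
    linarith
  -- Claim B : p c1 ≤ 1 - p ci + β
  have hB : p c1 ≤ 1 - p ci + β := by
    by_contra h
    push_neg at h
    have hp1pos : 0 < p c1 := by linarith [hpi.2]
    have hsub : univ.filter (fun i : S => c1 ∈ a i) ⊆ G₂ := by
      intro i hi
      simp only [Finset.mem_filter, Finset.mem_univ, true_and] at hi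
      by_contra hi2
      by_cases hi1' : i ∈ G₁
      · have := L1 i hi1' hi
        linarith [hb2 i]
      · exact hout1 i hi1' hi2 hi
    have hcard := Finset.card_le_card hsub
    rw [hG₂] at hcard
    have hcardR : (D c1 : ℝ) ≤ 3 * n := by exact_mod_cast hcard
    have := hdown c1 hp1pos
    rw [hcap1R] at this
    linarith
  -- Claim C : 1 - p c1 ≤ p cj
  have hC : 1 - p c1 ≤ p cj := by
    by_contra h
    push_neg at h
    have hlt : p c1 + p cj < 1 := by linarith
    have hsub : G₂ ⊆ univ.filter (fun i : S => cj ∈ a i) := by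
      intro i hi
      simp only [Finset.mem_filter, Finset.mem_univ, true_and]
      exact L4 i hi (by linarith [hb1 i])
    have hcard := Finset.card_le_card hsub
    rw [hG₂] at hcard
    have hcardR : (3 * n : ℝ) ≤ (D cj : ℝ) := by exact_mod_cast hcard
    have := hup cj
    rw [hcapjR] at this
    linarith
  -- Claim D : p cj ≤ 1 - p c1 + β
  have hD' : p cj ≤ 1 - p c1 + β := by
    by_contra h
    push_neg at h
    have hpjpos : 0 < p cj := by linarith [hpi.1]
    have hsub : univ.filter (fun i : S => cj ∈ a i) ⊆
        univ.filter (fun i : S => i ∉ G₂ ∧ cj ∈ a i) := by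
      intro i hi
      simp only [Finset.mem_filter, Finset.mem_univ, true_and] at hi ⊢
      refine ⟨?_, hi⟩
      intro hi2
      have := L3 i hi2 hi
      linarith [hb2 i]
    have hcard := le_trans (Finset.card_le_card hsub) houtj
    have hcardR : (D cj : ℝ) ≤ 2 * n := by exact_mod_cast hcard
    have := hdown cj hpjpos
    rw [hcapjR] at this
    linarith
  exact ⟨⟨hA, hB⟩, ⟨hC, hD'⟩, ⟨by linarith, by linarith⟩⟩
end

section
/- Let ε ≥ 0 and let x₁, x₂ ∈ [0,1]. Suppose the real numbers w and v satisfy |w − (1 − x₁)| ≤ ε and |v − (1 − min(w + x₂, 1))| ≤ 2ε. Then |v − max(x₁ − x₂, 0)| ≤ 3ε. -/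
/-- DIFF gate: a NOT gate applied to `x₁` followed by a NOT-SUM gadget computes
`max (x₁ - x₂) 0` with additive error at most `3ε`. -/
theorem diff_gate (ε x₁ x₂ w v : ℝ) (hε : 0 ≤ ε)
    (hx₁ : x₁ ∈ Set.Icc (0 : ℝ) 1) (hx₂ : x₂ ∈ Set.Icc (0 : ℝ) 1)
    (hw : |w - (1 - x₁)| ≤ ε)
    (hv : |v - (1 - min (w + x₂) 1)| ≤ 2 * ε) :
    |v - max (x₁ - x₂) 0| ≤ 3 * ε := by
  obtain ⟨h1, h2⟩ := hx₁
  obtain ⟨h3, h4⟩ := hx₂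
  rw [abs_le] at hw hv ⊢
  rcases le_total (w + x₂) 1 with h | h <;>
    rcases le_total (x₁ - x₂) 0 with h' | h' <;>
    simp [min_eq_left, min_eq_right, max_eq_left, max_eq_right, h, h'] at hv ⊢ <;>
    constructor <;> linarith
end

section
/- Let ε > 0 and let k be a natural number such that 2^k · 10ε = 1. Let a : ℕ → ℝ be a sequence with a(0) = x such that |a(j+1) − 2·a(j)| ≤ ε for every j < k. Then: (i) if x > 10ε, then a(k) > 0.9 + ε; and (ii) if 0 ≤ x < 1.5ε, then a(k) < 0.25 − ε. -/
/-- Amplification step of the LESS gate: applying the DOUBLE gadget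
`k = log₂(1/(10ε))` times separates values above `10ε` (sent above `0.9 + ε`)
from values below `1.5ε` (sent below `0.25 - ε`). -/
theorem double_gadget_amplification (ε x : ℝ) (hε : 0 < ε) (k : ℕ)
    (hk : (2 : ℝ) ^ k * (10 * ε) = 1) (a : ℕ → ℝ)
    (ha0 : a 0 = x)
    (hstep : ∀ j < k, |a (j + 1) - 2 * a j| ≤ ε) :
    (10 * ε < x → 0.9 + ε < a k) ∧ (0 ≤ x → x < 1.5 * ε → a k < 0.25 - ε) := by
  have key : ∀ j ≤ k, |a j - 2 ^ j * x| ≤ (2 ^ j - 1) * ε := by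
    intro j hj
    induction j with
    | zero => simp [ha0]
    | succ n ih =>
      have hn : n < k := Nat.lt_of_succ_le hj
      have h1 := hstep n hn
      have h2 := ih (le_of_lt hn)
      have : |a (n + 1) - 2 ^ (n + 1) * x| ≤
          |a (n + 1) - 2 * a n| + 2 * |a n - 2 ^ n * x| := by
        have := abs_add_le (a (n + 1) - 2 * a n) (2 * (a n - 2 ^ n * x))
        rw [abs_mul] at this
        simp only [abs_two] at this
        calc |a (n + 1) - 2 ^ (n + 1) * x|
            = |(a (n + 1) - 2 * a n) + 2 * (a n - 2 ^ n * x)| := by ring_nf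
          _ ≤ _ := this
      calc |a (n + 1) - 2 ^ (n + 1) * x|
          ≤ |a (n + 1) - 2 * a n| + 2 * |a n - 2 ^ n * x| := this
        _ ≤ ε + 2 * ((2 ^ n - 1) * ε) := by nlinarith
        _ = (2 ^ (n + 1) - 1) * ε := by ring
  have hkk := key k le_rfl
  have habs := abs_le.mp hkk
  have hke : (2 : ℝ) ^ k * ε = 1 / 10 := by nlinarith
  constructor
  · intro hx
    have hpow : (0 : ℝ) < 2 ^ k := by positivity
    nlinarith [habs.1, mul_lt_mul_of_pos_left hx hpow]
  · intro hx0 hx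
    have hpow : (0 : ℝ) < 2 ^ k := by positivity
    nlinarith [habs.2, mul_lt_mul_of_pos_left hx hpow]
end

section
/- Let ε ≥ 0 with ε ≤ 1/40, and let x, y ≥ 0. Suppose the real numbers s, c, d, r satisfy |s − max(1 − x − y, 0)| ≤ 2ε, |c − 1/4| ≤ 2ε, |d − max(s − c, 0)| ≤ 3ε, and |r − min(2d, 1)| ≤ ε. Then: (i) if x > 0.9 or y > 0.9, then |r| ≤ 11ε; and (ii) if x < 0.1 and y < 0.1, then |r − 1| ≤ 11ε. -/
/-- NOR gadget: a NOT-SUM gadget followed by a ROUND gadget outputs approximately `0`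
when some input exceeds `0.9` and approximately `1` when both inputs are below `0.1`. -/
theorem nor_gadget (ε x y s c d r : ℝ) (hε : 0 ≤ ε) (hε' : ε ≤ 1 / 40)
    (hx : 0 ≤ x) (hy : 0 ≤ y)
    (hs : |s - max (1 - x - y) 0| ≤ 2 * ε)
    (hc : |c - 1 / 4| ≤ 2 * ε)
    (hd : |d - max (s - c) 0| ≤ 3 * ε)
    (hr : |r - min (2 * d) 1| ≤ ε) :
    (0.9 < x ∨ 0.9 < y → |r| ≤ 11 * ε) ∧
    (x < 0.1 → y < 0.1 → |r - 1| ≤ 11 * ε) := by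
  rw [abs_le] at hs hc hd hr
  constructor
  · intro hxy
    have hm : max (1 - x - y) 0 ≤ 0.1 := by
      rcases hxy with h | h <;> apply max_le <;> linarith
    have hm0 : (0:ℝ) ≤ max (1 - x - y) 0 := le_max_right _ _
    have hsc : s - c ≤ 0 := by linarith [hs.2, hc.1]
    have hmax : max (s - c) 0 = 0 := max_eq_right hsc
    rw [hmax] at hd
    have hmin : min (2 * d) 1 = 2 * d := min_eq_left (by linarith [hd.2])
    rw [hmin] at hr
    rw [abs_le]
    constructor <;> linarith [hd.1, hd.2, hr.1, hr.2]
  · intro hx1 hy1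
    have hm : max (1 - x - y) 0 = 1 - x - y := max_eq_left (by linarith)
    rw [hm] at hs
    have hsc : 0 ≤ s - c := by linarith [hs.1, hc.2]
    rw [max_eq_left hsc] at hd
    have hd1 : 1 - (14 * ε - 1/10) ≤ 2 * d := by linarith [hd.1, hs.1, hc.2]
    rcases le_total (2 * d) 1 with h | h
    · rw [min_eq_left h] at hr
      rw [abs_le]
      constructor <;> linarith [hr.1, hr.2]
    · rw [min_eq_right h] at hr
      rw [abs_le]
      constructor <;> linarith [hr.1, hr.2]
end

section
/- Let ε ≥ 0 with ε ≤ 1/40, and let x, y ≥ 0. Suppose the real numbers s, c, d, r, o satisfy |s − max(1 − x − y, 0)| ≤ 2ε, |c − 1/4| ≤ 2ε, |d − max(s − c, 0)| ≤ 3ε, |r − min(2d, 1)| ≤ ε, and |o − (1 − r)| ≤ ε. Then: (i) if x > 0.9 or y > 0.9, then |o − 1| ≤ 12ε; and (ii) if x < 0.1 and y < 0.1, then |o| ≤ 12ε. -/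
/-- OR gate: a NOR gadget followed by a NOT gate outputs approximately `1` when some
input exceeds `0.9` and approximately `0` when both inputs are below `0.1`. -/
theorem or_gate (ε x y s c d r o : ℝ) (hε : 0 ≤ ε) (hε' : ε ≤ 1 / 40)
    (hx : 0 ≤ x) (hy : 0 ≤ y)
    (hs : |s - max (1 - x - y) 0| ≤ 2 * ε)
    (hc : |c - 1 / 4| ≤ 2 * ε)
    (hd : |d - max (s - c) 0| ≤ 3 * ε)
    (hr : |r - min (2 * d) 1| ≤ ε)
    (ho : |o - (1 - r)| ≤ ε) :
    (0.9 < x ∨ 0.9 < y → |o - 1| ≤ 12 * ε) ∧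
    (x < 0.1 → y < 0.1 → |o| ≤ 12 * ε) := by
  rw [abs_le] at hs hc hd hr ho
  constructor
  · intro h
    have h1 : max (1 - x - y) 0 ≤ 0.1 := by
      rcases h with h | h <;> apply max_le (by linarith) (by norm_num)
    have h2 : max (s - c) 0 = 0 := max_eq_right (by linarith [hs.2, hc.1])
    rw [h2] at hd
    have h3 : min (2 * d) 1 = 2 * d := min_eq_left (by linarith [hd.2])
    rw [h3] at hr
    rw [abs_le]
    constructor <;> linarith [hd.1, hd.2, hr.1, hr.2, ho.1, ho.2]
  · intro hx1 hy1
    have h1 : max (1 - x - y) 0 = 1 - x - y := max_eq_left (by linarith)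
    rw [h1] at hs
    have h2 : max (s - c) 0 = s - c := max_eq_left (by linarith [hs.1, hc.2])
    rw [h2] at hd
    rw [abs_le]
    by_cases h2d : 2 * d ≤ 1
    · have h3 : min (2 * d) 1 = 2 * d := min_eq_left h2d
      rw [h3] at hr
      constructor <;> linarith [hd.1, hd.2, hr.1, hr.2, ho.1, ho.2, hs.1, hc.2]
    · have h3 : min (2 * d) 1 = 1 := min_eq_right (by linarith)
      rw [h3] at hr
      constructor <;> linarith [hr.1, hr.2, ho.1, ho.2]
end

section
/- Let ε ≥ 0 with ε ≤ 1/80, and let x, y ∈ [0, 1]. Suppose the real numbers x', y', s, c, d, r satisfy |x' − (1 − x)| ≤ ε, |y' − (1 − y)| ≤ ε, |s − max(1 − x' − y', 0)| ≤ 2ε, |c − 1/4| ≤ 2ε, |d − max(s − c, 0)| ≤ 3ε, and |r − min(2d, 1)| ≤ ε. Then: (i) if x > 0.9 and y > 0.9, then |r − 1| ≤ 11ε; and (ii) if x < 0.1 or y < 0.1, then |r| ≤ 11ε. -/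
/-- AND gate: applying NOT gates to both inputs and then a NOR gadget outputs
approximately `1` when both inputs exceed `0.9` and approximately `0` when some
input is below `0.1`. -/
theorem and_gate (ε x y x' y' s c d r : ℝ) (hε : 0 ≤ ε) (hε' : ε ≤ 1 / 80)
    (hx : x ∈ Set.Icc (0 : ℝ) 1) (hy : y ∈ Set.Icc (0 : ℝ) 1)
    (hx' : |x' - (1 - x)| ≤ ε) (hy' : |y' - (1 - y)| ≤ ε)
    (hs : |s - max (1 - x' - y') 0| ≤ 2 * ε)
    (hc : |c - 1 / 4| ≤ 2 * ε)
    (hd : |d - max (s - c) 0| ≤ 3 * ε)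
    (hr : |r - min (2 * d) 1| ≤ ε) :
    (0.9 < x → 0.9 < y → |r - 1| ≤ 11 * ε) ∧
    (x < 0.1 ∨ y < 0.1 → |r| ≤ 11 * ε) := by
  obtain ⟨hx0, hx1⟩ := hx
  obtain ⟨hy0, hy1⟩ := hy
  rw [abs_le] at hx' hy' hc
  constructor
  · intro h9x h9y
    rw [abs_le]
    rcases max_cases (1 - x' - y') (0 : ℝ) with ⟨h1, h1'⟩ | ⟨h1, h1'⟩ <;>
      rw [h1] at hs <;> rw [abs_le] at hs <;>
      [skip; (exfalso; linarith)]
    rcases max_cases (s - c) (0 : ℝ) with ⟨h2, h2'⟩ | ⟨h2, h2'⟩ <;>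
      rw [h2] at hd <;> rw [abs_le] at hd <;>
      [skip; (exfalso; linarith)]
    rcases min_cases (2 * d) (1 : ℝ) with ⟨h3, h3'⟩ | ⟨h3, h3'⟩ <;>
      rw [h3] at hr <;> rw [abs_le] at hr <;> constructor <;> linarith
  · intro hlo
    rw [abs_le]
    have hs' : s ≤ 1 / 10 + 4 * ε ∧ -(2 * ε) ≤ s := by
      rcases max_cases (1 - x' - y') (0 : ℝ) with ⟨h1, h1'⟩ | ⟨h1, h1'⟩ <;>
        rw [h1] at hs <;> rw [abs_le] at hs <;>
        rcases hlo with h | h <;> constructor <;> linarith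
    obtain ⟨hsu, hsl⟩ := hs'
    have hd' : d ≤ 3 * ε ∧ -(3 * ε) ≤ d := by
      rcases max_cases (s - c) (0 : ℝ) with ⟨h2, h2'⟩ | ⟨h2, h2'⟩ <;>
        rw [h2] at hd <;> rw [abs_le] at hd <;> constructor <;> linarith
    obtain ⟨hdu, hdl⟩ := hd'
    rcases min_cases (2 * d) (1 : ℝ) with ⟨h3, h3'⟩ | ⟨h3, h3'⟩ <;>
      rw [h3] at hr <;> rw [abs_le] at hr <;> constructor <;> linarith
end

section
/- Let p be nonnegative course prices over m courses, and let students i and j have budgets b_i and b_j with b_i ≥ b_j. Suppose student i's bundle a_i satisfies p·a_i ≤ b_i and u_i(a_i) ≥ u_i(S) for every bundle S with p·S ≤ b_i, and that student j's bundle a_j satisfies p·a_j ≤ b_j. Then for every bundle S ⊆ a_j ∪ {k : p_k = 0}, we have u_i(S) ≤ u_i(a_i); in particular, student i does not strictly contested-envy student j. -/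
open Finset

/-- In an A-CEEI, no student can contested-envy a student whose budget is not larger:
if student `i` receives a utility-maximal bundle among those affordable under budget
`bi`, and student `j`'s bundle is affordable under budget `bj ≤ bi`, then every subset
of `j`'s bundle together with the zero-priced (uncontested) courses is weakly worse
for `i` than `i`'s own bundle. -/
theorem no_contested_envy_of_smaller_budget {C : Type*} [Fintype C] [DecidableEq C]
    (p : C → ℝ) (hp : ∀ k, 0 ≤ p k)
    (ui : Finset C → ℝ) (bi bj : ℝ) (hb : bj ≤ bi)
    (ai aj : Finset C)
    (hai_afford : ∑ k ∈ ai, p k ≤ bi)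
    (hai_opt : ∀ T : Finset C, ∑ k ∈ T, p k ≤ bi → ui T ≤ ui ai)
    (haj_afford : ∑ k ∈ aj, p k ≤ bj) :
    ∀ T : Finset C, T ⊆ aj ∪ univ.filter (fun k => p k = 0) → ui T ≤ ui ai := by
  intro T hT
  apply hai_opt
  calc ∑ k ∈ T, p k = ∑ k ∈ T, (if p k = 0 then 0 else p k) := by
        apply Finset.sum_congr rfl; intro k _; split <;> simp_all
    _ ≤ ∑ k ∈ T ∩ aj, (if p k = 0 then 0 else p k) := by
        rw [← Finset.sum_filter_add_sum_filter_not T (fun k => k ∈ aj)]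
        have h2 : ∑ k ∈ T.filter (fun k => k ∉ aj), (if p k = 0 then 0 else p k) = 0 := by
          apply Finset.sum_eq_zero
          intro k hk
          simp only [Finset.mem_filter] at hk
          have := hT hk.1
          simp only [Finset.mem_union, Finset.mem_filter] at this
          rcases this with h | h
          · exact absurd h hk.2
          · simp [h.2]
        rw [h2, add_zero, Finset.filter_mem_eq_inter]
    _ ≤ ∑ k ∈ aj, (if p k = 0 then 0 else p k) := by
        apply Finset.sum_le_sum_of_subset_of_nonneg (Finset.inter_subset_right)
        intro k _ _; split <;> [rfl; exact hp k]
    _ = ∑ k ∈ aj, p k := by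
        apply Finset.sum_congr rfl; intro k _; split <;> simp_all
    _ ≤ bi := le_trans haj_afford hb
end
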